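/- In a finite zs-POSG, the occupancy state is a sufficient statistic of the information state for evaluating any fixed joint policy: for any stage τ, any prefix of joint decision rules (a_0, …, a_{τ−1}) inducing occupancy state s_τ, and any continuation joint policy a_{τ:} = (a_τ, …, a_{ℓ−1}), the expected discounted return from stage τ equals E[ Σ_{t=τ}^{ℓ−1} γ^{t−τ} r(x_t, u_t) ] = Σ_{x ∈ X} Σ_{o ∈ O_τ} s_τ(x, o) · α^{a_{τ:}}_τ(x, o). Consequently, any two prefixes of joint decision rules inducing the same occupancy state s_τ yield the same expected continuation return under every continuation joint policy. -/

import Mathlib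

open scoped BigOperators

section ZSPOSG

/-- A finitely supported probability distribution on a finite type,
represented as a nonnegative real-valued function summing to one. -/
def IsDist {α : Type} [Fintype α] (f : α → ℝ) : Prop :=
  (∀ a, 0 ≤ f a) ∧ ∑ a, f a = 1

/-- Stage-`τ` histories of player 1: sequences `(u¹_0, z¹_1, …, u¹_{τ-1}, z¹_τ)`. -/
abbrev Hist1 (U1 Z1 : Type) (τ : ℕ) : Type := Fin τ → U1 × Z1

/-- Stage-`τ` histories of player 2. -/
abbrev Hist2 (U2 Z2 : Type) (τ : ℕ) : Type := Fin τ → U2 × Z2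

/-- Stage-`τ` joint histories. -/
abbrev JHist (U1 Z1 U2 Z2 : Type) (τ : ℕ) : Type :=
  Hist1 U1 Z1 τ × Hist2 U2 Z2 τ

/-- Stage-`τ` stochastic decision rules of player 1. -/
abbrev DR1 (U1 Z1 : Type) [Fintype U1] (τ : ℕ) : Type :=
  {a : Hist1 U1 Z1 τ → U1 → ℝ // ∀ o, IsDist (a o)}

/-- Stage-`τ` stochastic decision rules of player 2. -/
abbrev DR2 (U2 Z2 : Type) [Fintype U2] (τ : ℕ) : Type :=
  {a : Hist2 U2 Z2 τ → U2 → ℝ // ∀ o, IsDist (a o)}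

variable {X U1 U2 Z1 Z2 : Type}
variable [Fintype X] [Fintype U1] [Fintype U2] [Fintype Z1] [Fintype Z2]

/-- Expected immediate reward `R(s_τ, a_τ)`. -/
noncomputable def Rstage (r : X → U1 × U2 → ℝ) (τ : ℕ)
    (s : X × JHist U1 Z1 U2 Z2 τ → ℝ) (a1 : DR1 U1 Z1 τ) (a2 : DR2 U2 Z2 τ) : ℝ :=
  ∑ xo : X × JHist U1 Z1 U2 Z2 τ, s xo *
    ∑ u : U1 × U2, a1.1 xo.2.1 u.1 * a2.1 xo.2.2 u.2 * r xo.1 u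

/-- Occupancy-state transition `T(s_τ, a_τ)`:
`T(s,a)(y,(o,u,z)) = a(u|o) ⬝ Σ_x s(x,o) p(y,z|x,u)`. -/
noncomputable def Tstage (p : X → U1 × U2 → X × (Z1 × Z2) → ℝ) (τ : ℕ)
    (s : X × JHist U1 Z1 U2 Z2 τ → ℝ) (a1 : DR1 U1 Z1 τ) (a2 : DR2 U2 Z2 τ) :
    X × JHist U1 Z1 U2 Z2 (τ + 1) → ℝ := fun yo =>
  let o1 : Hist1 U1 Z1 τ := fun i => yo.2.1 i.castSucc
  let o2 : Hist2 U2 Z2 τ := fun i => yo.2.2 i.castSucc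
  let u1 := (yo.2.1 (Fin.last τ)).1
  let z1 := (yo.2.1 (Fin.last τ)).2
  let u2 := (yo.2.2 (Fin.last τ)).1
  let z2 := (yo.2.2 (Fin.last τ)).2
  a1.1 o1 u1 * a2.1 o2 u2 * ∑ x : X, s (x, (o1, o2)) * p x (u1, u2) (yo.1, (z1, z2))

/-- Optimal value functions defined by backward induction: `vstar p r γ k τ s` is
`v*_τ(s)` when `k = ℓ - τ` stages remain; `vstar … 0 _ ≡ 0` and
`v*_τ(s) = max_{a¹} min_{a²} [R(s,a) + γ v*_{τ+1}(T(s,a))]`. -/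
noncomputable def vstar (p : X → U1 × U2 → X × (Z1 × Z2) → ℝ) (r : X → U1 × U2 → ℝ)
    (γ : ℝ) : (k : ℕ) → (τ : ℕ) → (X × JHist U1 Z1 U2 Z2 τ → ℝ) → ℝ
  | 0, _, _ => 0
  | k + 1, τ, s =>
      ⨆ a1 : DR1 U1 Z1 τ, ⨅ a2 : DR2 U2 Z2 τ,
        Rstage r τ s a1 a2 + γ * vstar p r γ k (τ + 1) (Tstage p τ s a1 a2)

/-- Player-2 marginal occupancy state `s^{m,2}_τ(o²) = Σ_x Σ_{o¹} s(x,(o¹,o²))`. -/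
noncomputable def marg2 (τ : ℕ) (s : X × JHist U1 Z1 U2 Z2 τ → ℝ)
    (o2 : Hist2 U2 Z2 τ) : ℝ :=
  ∑ x : X, ∑ o1 : Hist1 U1 Z1 τ, s (x, (o1, o2))

/-- Conditional occupancy state `s^{c,o²}_τ(x,o¹) = s(x,(o¹,o²)) / s^{m,2}_τ(o²)`. -/
noncomputable def condOcc (τ : ℕ) (s : X × JHist U1 Z1 U2 Z2 τ → ℝ)
    (o2 : Hist2 U2 Z2 τ) : X × Hist1 U1 Z1 τ → ℝ :=
  fun xo1 => s (xo1.1, (xo1.2, o2)) / marg2 τ s o2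

/-- Recomposition `c ⊙ m` of a conditional occupancy-state family `c` with a
player-2 marginal `m`: `(c ⊙ m)(x,(o¹,o²)) = c(o²)(x,o¹) ⬝ m(o²)`. -/
noncomputable def odot (τ : ℕ) (c : Hist2 U2 Z2 τ → X × Hist1 U1 Z1 τ → ℝ)
    (m : Hist2 U2 Z2 τ → ℝ) : X × JHist U1 Z1 U2 Z2 τ → ℝ :=
  fun xo => c xo.2.2 (xo.1, xo.2.1) * m xo.2.2

/-- 1-norm distance between two real-valued functions on a finite type. -/
noncomputable def dist1 {α : Type} [Fintype α] (f g : α → ℝ) : ℝ :=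
  ∑ a : α, |f a - g a|

/-- Full trajectories of length `τ`: the states `x_0,…,x_τ` together with the
per-player controls and observations `((u¹_t, z¹_{t+1}), (u²_t, z²_{t+1}))` for `t < τ`. -/
abbrev Traj (X U1 Z1 U2 Z2 : Type) (τ : ℕ) : Type :=
  (Fin (τ + 1) → X) × (Fin τ → (U1 × Z1) × (U2 × Z2))

/-- The stage-`t` joint history determined by the first `t` moves of a trajectory. -/
def histUpTo (τ : ℕ) (mv : Fin τ → (U1 × Z1) × (U2 × Z2)) (t : ℕ) (ht : t ≤ τ) :
    JHist U1 Z1 U2 Z2 t :=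
  (fun i => (mv (Fin.castLE ht i)).1, fun i => (mv (Fin.castLE ht i)).2)

/-- Probability of a trajectory under the process induced by `s0` and a joint
policy: `x_0 ∼ s0`, `u_t ∼ a_t(·|o_t)`, `(x_{t+1}, z_{t+1}) ∼ p(·|x_t, u_t)`. -/
noncomputable def trajProb (p : X → U1 × U2 → X × (Z1 × Z2) → ℝ) (s0 : X → ℝ)
    (pol1 : (t : ℕ) → DR1 U1 Z1 t) (pol2 : (t : ℕ) → DR2 U2 Z2 t)
    (τ : ℕ) (w : Traj X U1 Z1 U2 Z2 τ) : ℝ :=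
  s0 (w.1 0) * ∏ t : Fin τ,
    ((pol1 t.1).1 (histUpTo τ w.2 t.1 t.isLt.le).1 ((w.2 t).1.1) *
     (pol2 t.1).1 (histUpTo τ w.2 t.1 t.isLt.le).2 ((w.2 t).2.1) *
     p (w.1 t.castSucc) ((w.2 t).1.1, (w.2 t).2.1)
       (w.1 t.succ, ((w.2 t).1.2, (w.2 t).2.2)))

variable [DecidableEq X] [DecidableEq U1] [DecidableEq U2] [DecidableEq Z1] [DecidableEq Z2]

/-- The occupancy state induced by `(s0, a_0, …, a_{τ-1})`:
`s_τ(x,o) = Pr{x_τ = x, o_τ = o}`. -/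
noncomputable def occInduced (p : X → U1 × U2 → X × (Z1 × Z2) → ℝ) (s0 : X → ℝ)
    (pol1 : (t : ℕ) → DR1 U1 Z1 t) (pol2 : (t : ℕ) → DR2 U2 Z2 t)
    (τ : ℕ) : X × JHist U1 Z1 U2 Z2 τ → ℝ := fun xo =>
  ∑ w : Traj X U1 Z1 U2 Z2 τ,
    if w.1 (Fin.last τ) = xo.1 ∧ histUpTo τ w.2 τ le_rfl = xo.2
    then trajProb p s0 pol1 pol2 τ w else 0

/-- `α^{a_{τ:}}_τ(x,o)` defined by the backward recursion `α_ℓ ≡ 0` and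
`α_τ(x,o) = Σ_u a_τ(u|o) [r(x,u) + γ Σ_{y,z} p(y,z|x,u) α_{τ+1}(y,(o,u,z))]`;
`alphaRec … k τ` is `α_τ` when `k = ℓ - τ` stages remain. -/
noncomputable def alphaRec (p : X → U1 × U2 → X × (Z1 × Z2) → ℝ) (r : X → U1 × U2 → ℝ)
    (γ : ℝ) (pol1 : (t : ℕ) → DR1 U1 Z1 t) (pol2 : (t : ℕ) → DR2 U2 Z2 t) :
    (k : ℕ) → (τ : ℕ) → X → JHist U1 Z1 U2 Z2 τ → ℝ
  | 0, _, _, _ => 0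
  | k + 1, τ, x, o =>
      ∑ u : U1 × U2, (pol1 τ).1 o.1 u.1 * (pol2 τ).1 o.2 u.2 *
        (r x u + γ * ∑ yz : X × (Z1 × Z2), p x u yz *
          alphaRec p r γ pol1 pol2 k (τ + 1) yz.1
            (Fin.snoc o.1 (u.1, yz.2.1), Fin.snoc o.2 (u.2, yz.2.2)))

/-- Expected discounted return `E[Σ_{t=τ}^{ℓ-1} γ^{t-τ} r(x_t, u_t)]` under the
process induced by `s0` and the joint policy. -/
noncomputable def expReturnFrom (p : X → U1 × U2 → X × (Z1 × Z2) → ℝ)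
    (r : X → U1 × U2 → ℝ) (γ : ℝ) (s0 : X → ℝ)
    (pol1 : (t : ℕ) → DR1 U1 Z1 t) (pol2 : (t : ℕ) → DR2 U2 Z2 t)
    (ℓ τ : ℕ) : ℝ :=
  ∑ w : Traj X U1 Z1 U2 Z2 ℓ, trajProb p s0 pol1 pol2 ℓ w *
    ∑ t : Fin ℓ, if τ ≤ t.1
      then γ ^ (t.1 - τ) * r (w.1 t.castSucc) ((w.2 t).1.1, (w.2 t).2.1) else 0

end ZSPOSG

/-!
Let `E_t` be the expected stage-`t` reward under the whole policy. Summing a function of a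
length-`(n+1)` trajectory against the trajectory law is the same as summing its one-step
conditional expectation against the length-`n` law, because the next controls and the transition
are probability distributions. Marginalising in this way turns the expected return from `τ` into
`Σ_i γ^i E_{τ+i}`, and unrolling the recursion for `α` shows that `Σ_w Pr(w) α_τ(x_τ, o_τ)` is the
same sum. The law of length-`τ` trajectories involves only the prefix and `α_τ` only the
continuation, and grouping trajectories by their final state and history turns
`Σ_w Pr(w) α_τ(x_τ, o_τ)` into `Σ_{x,o} s_τ(x,o) α_τ(x,o)`.
-/

section PolicyEvaluation

variable {X U1 U2 Z1 Z2 : Type}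

def finalHist {n : ℕ} (w : Traj X U1 Z1 U2 Z2 n) : JHist U1 Z1 U2 Z2 n :=
  histUpTo n w.2 n le_rfl

def trajExtend {n : ℕ} (w : Traj X U1 Z1 U2 Z2 n) (u : U1 × U2) (yz : X × (Z1 × Z2)) :
    Traj X U1 Z1 U2 Z2 (n + 1) :=
  (Fin.snoc w.1 yz.1, Fin.snoc w.2 ((u.1, yz.2.1), (u.2, yz.2.2)))

def trajExtendEquiv (n : ℕ) :
    Traj X U1 Z1 U2 Z2 n × (U1 × U2) × (X × (Z1 × Z2)) ≃ Traj X U1 Z1 U2 Z2 (n + 1) where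
  toFun q := trajExtend q.1 q.2.1 q.2.2
  invFun w := ((Fin.init w.1, Fin.init w.2), ((w.2 (Fin.last n)).1.1, (w.2 (Fin.last n)).2.1),
    (w.1 (Fin.last (n + 1)), ((w.2 (Fin.last n)).1.2, (w.2 (Fin.last n)).2.2)))
  left_inv q := by simp [trajExtend]
  right_inv w := by simp [trajExtend]

theorem histUpTo_snoc {n t : ℕ} (mv : Fin n → (U1 × Z1) × (U2 × Z2))
    (m : (U1 × Z1) × (U2 × Z2)) (h : t ≤ n) (h' : t ≤ n + 1) :
    histUpTo (n + 1) (Fin.snoc mv m) t h' = histUpTo n mv t h := by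
  have hcast : ∀ i : Fin t, Fin.castLE h' i = (Fin.castLE h i).castSucc := fun _ => rfl
  simp only [histUpTo, hcast, Fin.snoc_castSucc]

theorem finalHist_trajExtend {n : ℕ} (w : Traj X U1 Z1 U2 Z2 n) (u : U1 × U2)
    (yz : X × (Z1 × Z2)) :
    finalHist (trajExtend w u yz) =
      (Fin.snoc (finalHist w).1 (u.1, yz.2.1), Fin.snoc (finalHist w).2 (u.2, yz.2.2)) := by
  simp only [finalHist, histUpTo, trajExtend]
  refine Prod.ext (funext fun i => ?_) (funext fun i => ?_) <;>
    induction i using Fin.lastCases <;> simp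

def trajRestrict {n m : ℕ} (h : n ≤ m) (w : Traj X U1 Z1 U2 Z2 m) : Traj X U1 Z1 U2 Z2 n :=
  (fun i => w.1 (Fin.castLE (Nat.succ_le_succ h) i), fun i => w.2 (Fin.castLE h i))

theorem trajRestrict_trajExtend {n m : ℕ} (h : n ≤ m) (w : Traj X U1 Z1 U2 Z2 m)
    (u : U1 × U2) (yz : X × (Z1 × Z2)) :
    trajRestrict (h.trans m.le_succ) (trajExtend w u yz) = trajRestrict h w := by
  have hcast : ∀ {k l : ℕ} (hk : k ≤ l) (hk' : k ≤ l + 1) (i : Fin k),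
      Fin.castLE hk' i = (Fin.castLE hk i).castSucc := fun _ _ _ => rfl
  simp only [trajRestrict, trajExtend, hcast (Nat.succ_le_succ h), hcast h, Fin.snoc_castSucc]

def lastReward (r : X → U1 × U2 → ℝ) {n : ℕ} (w : Traj X U1 Z1 U2 Z2 (n + 1)) : ℝ :=
  r (w.1 (Fin.last n).castSucc) ((w.2 (Fin.last n)).1.1, (w.2 (Fin.last n)).2.1)

variable [Fintype U1] [Fintype U2]

def jointRule (pol1 : (t : ℕ) → DR1 U1 Z1 t) (pol2 : (t : ℕ) → DR2 U2 Z2 t) (n : ℕ)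
    (o : JHist U1 Z1 U2 Z2 n) (u : U1 × U2) : ℝ :=
  (pol1 n).1 o.1 u.1 * (pol2 n).1 o.2 u.2

theorem sum_jointRule (pol1 : (t : ℕ) → DR1 U1 Z1 t) (pol2 : (t : ℕ) → DR2 U2 Z2 t) (n : ℕ)
    (o : JHist U1 Z1 U2 Z2 n) : ∑ u, jointRule pol1 pol2 n o u = 1 := by
  simp only [jointRule, Fintype.sum_prod_type, ← Finset.mul_sum, ((pol1 n).2 o.1).2,
    ((pol2 n).2 o.2).2, mul_one]

theorem trajProb_trajExtend (p : X → U1 × U2 → X × (Z1 × Z2) → ℝ) (s0 : X → ℝ)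
    (pol1 : (t : ℕ) → DR1 U1 Z1 t) (pol2 : (t : ℕ) → DR2 U2 Z2 t) {n : ℕ}
    (w : Traj X U1 Z1 U2 Z2 n) (u : U1 × U2) (yz : X × (Z1 × Z2)) :
    trajProb p s0 pol1 pol2 (n + 1) (trajExtend w u yz) =
      trajProb p s0 pol1 pol2 n w *
        (jointRule pol1 pol2 n (finalHist w) u * p (w.1 (Fin.last n)) u yz) := by
  have h0 : (Fin.snoc w.1 yz.1 : Fin (n + 2) → X) 0 = w.1 0 := Fin.snoc_castSucc (i := 0) ..
  simp only [trajProb, trajExtend, Fin.prod_univ_castSucc, Fin.val_castSucc, Fin.snoc_castSucc,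
    Fin.succ_castSucc, Fin.val_last, Fin.snoc_last, Fin.succ_last, h0, histUpTo_snoc, Fin.is_le',
    le_refl, jointRule, finalHist]
  ring

theorem trajProb_congr (p : X → U1 × U2 → X × (Z1 × Z2) → ℝ) (s0 : X → ℝ)
    {pol1 pol1' : (t : ℕ) → DR1 U1 Z1 t} {pol2 pol2' : (t : ℕ) → DR2 U2 Z2 t} {n : ℕ}
    (h1 : ∀ t < n, pol1 t = pol1' t) (h2 : ∀ t < n, pol2 t = pol2' t) :
    trajProb p s0 pol1 pol2 n = trajProb p s0 pol1' pol2' n := by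
  funext w
  simp only [trajProb, h1 _ (Fin.is_lt _), h2 _ (Fin.is_lt _)]

variable [Fintype X] [Fintype Z1] [Fintype Z2]

def nextStepExpect (p : X → U1 × U2 → X × (Z1 × Z2) → ℝ)
    (pol1 : (t : ℕ) → DR1 U1 Z1 t) (pol2 : (t : ℕ) → DR2 U2 Z2 t) {n : ℕ}
    (G : Traj X U1 Z1 U2 Z2 (n + 1) → ℝ) (w : Traj X U1 Z1 U2 Z2 n) : ℝ :=
  ∑ u, jointRule pol1 pol2 n (finalHist w) u *
    ∑ yz, p (w.1 (Fin.last n)) u yz * G (trajExtend w u yz)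

theorem sum_trajProb_succ (p : X → U1 × U2 → X × (Z1 × Z2) → ℝ) (s0 : X → ℝ)
    (pol1 : (t : ℕ) → DR1 U1 Z1 t) (pol2 : (t : ℕ) → DR2 U2 Z2 t) {n : ℕ}
    (G : Traj X U1 Z1 U2 Z2 (n + 1) → ℝ) :
    ∑ w, trajProb p s0 pol1 pol2 (n + 1) w * G w =
      ∑ w, trajProb p s0 pol1 pol2 n w * nextStepExpect p pol1 pol2 G w := by
  rw [← (trajExtendEquiv n).sum_comp, Fintype.sum_prod_type]
  refine Finset.sum_congr rfl fun w _ => ?_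
  rw [Fintype.sum_prod_type, nextStepExpect, Finset.mul_sum]
  refine Finset.sum_congr rfl fun u _ => ?_
  rw [Finset.mul_sum, Finset.mul_sum]
  refine Finset.sum_congr rfl fun yz _ => ?_
  rw [trajExtendEquiv, Equiv.coe_fn_mk, trajProb_trajExtend]
  ring

theorem nextStepExpect_of_forall_eq (p : X → U1 × U2 → X × (Z1 × Z2) → ℝ)
    (hp : ∀ x u, IsDist (p x u)) (pol1 : (t : ℕ) → DR1 U1 Z1 t)
    (pol2 : (t : ℕ) → DR2 U2 Z2 t) {n : ℕ} {G : Traj X U1 Z1 U2 Z2 (n + 1) → ℝ}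
    {w : Traj X U1 Z1 U2 Z2 n} {c : ℝ} (hG : ∀ u yz, G (trajExtend w u yz) = c) :
    nextStepExpect p pol1 pol2 G w = c := by
  simp only [nextStepExpect, hG, ← Finset.sum_mul, (hp _ _).2, one_mul, sum_jointRule]

theorem sum_trajProb_mul_trajRestrict (p : X → U1 × U2 → X × (Z1 × Z2) → ℝ)
    (hp : ∀ x u, IsDist (p x u)) (s0 : X → ℝ) (pol1 : (t : ℕ) → DR1 U1 Z1 t)
    (pol2 : (t : ℕ) → DR2 U2 Z2 t) {n m : ℕ} (h : n ≤ m) (G : Traj X U1 Z1 U2 Z2 n → ℝ) :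
    ∑ w, trajProb p s0 pol1 pol2 m w * G (trajRestrict h w) =
      ∑ w, trajProb p s0 pol1 pol2 n w * G w := by
  induction m, h using Nat.le_induction with
  | base => rfl
  | succ m h ih =>
    rw [sum_trajProb_succ, ← ih]
    refine Finset.sum_congr rfl fun w _ => ?_
    rw [nextStepExpect_of_forall_eq p hp pol1 pol2 fun u yz => by rw [trajRestrict_trajExtend h]]

noncomputable def expectedReward (p : X → U1 × U2 → X × (Z1 × Z2) → ℝ) (r : X → U1 × U2 → ℝ)
    (s0 : X → ℝ) (pol1 : (t : ℕ) → DR1 U1 Z1 t) (pol2 : (t : ℕ) → DR2 U2 Z2 t) (t : ℕ) : ℝ :=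
  ∑ w, trajProb p s0 pol1 pol2 (t + 1) w * lastReward r w

theorem expReturnFrom_eq_sum_expectedReward (p : X → U1 × U2 → X × (Z1 × Z2) → ℝ)
    (hp : ∀ x u, IsDist (p x u)) (r : X → U1 × U2 → ℝ) (γ : ℝ) (s0 : X → ℝ)
    (pol1 : (t : ℕ) → DR1 U1 Z1 t) (pol2 : (t : ℕ) → DR2 U2 Z2 t) {ℓ τ : ℕ} (hτ : τ ≤ ℓ) :
    expReturnFrom p r γ s0 pol1 pol2 ℓ τ =
      ∑ i ∈ Finset.range (ℓ - τ), γ ^ i * expectedReward p r s0 pol1 pol2 (τ + i) := by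
  have hstage : ∀ t : Fin ℓ,
      ∑ w, trajProb p s0 pol1 pol2 ℓ w * r (w.1 t.castSucc) ((w.2 t).1.1, (w.2 t).2.1) =
        expectedReward p r s0 pol1 pol2 t :=
    fun t => sum_trajProb_mul_trajRestrict p hp s0 pol1 pol2 t.isLt (lastReward r)
  obtain ⟨k, rfl⟩ := Nat.exists_eq_add_of_le hτ
  rw [Nat.add_sub_cancel_left]
  calc expReturnFrom p r γ s0 pol1 pol2 (τ + k) τ
      = ∑ t : Fin (τ + k), if τ ≤ t.1 then γ ^ (t.1 - τ) * expectedReward p r s0 pol1 pol2 t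
          else 0 := by
        simp only [expReturnFrom, Finset.mul_sum]
        rw [Finset.sum_comm]
        refine Finset.sum_congr rfl fun t _ => ?_
        split_ifs
        · simp only [← hstage, Finset.mul_sum]
          exact Finset.sum_congr rfl fun w _ => by ring
        · simp
    _ = ∑ i ∈ Finset.range k, γ ^ i * expectedReward p r s0 pol1 pol2 (τ + i) := by
        rw [Fin.sum_univ_eq_sum_range (fun t => if τ ≤ t then
          γ ^ (t - τ) * expectedReward p r s0 pol1 pol2 t else 0), Finset.sum_range_add]
        simp [Finset.sum_eq_zero fun t (ht : t ∈ Finset.range τ) =>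
          if_neg (Finset.mem_range.mp ht).not_ge]

theorem nextStepExpect_lastReward_add_alphaRec (p : X → U1 × U2 → X × (Z1 × Z2) → ℝ)
    (hp : ∀ x u, IsDist (p x u)) (r : X → U1 × U2 → ℝ) (γ : ℝ)
    (pol1 : (t : ℕ) → DR1 U1 Z1 t) (pol2 : (t : ℕ) → DR2 U2 Z2 t) (k : ℕ) {n : ℕ}
    (w : Traj X U1 Z1 U2 Z2 n) :
    nextStepExpect p pol1 pol2 (fun w' => lastReward r w' +
        γ * alphaRec p r γ pol1 pol2 k (n + 1) (w'.1 (Fin.last (n + 1))) (finalHist w')) w =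
      alphaRec p r γ pol1 pol2 (k + 1) n (w.1 (Fin.last n)) (finalHist w) := by
  have hreward : ∀ u yz, lastReward r (trajExtend w u yz) = r (w.1 (Fin.last n)) u := by
    simp [lastReward, trajExtend]
  have hstate : ∀ u yz, (trajExtend w u yz).1 (Fin.last (n + 1)) = yz.1 :=
    fun _ _ => Fin.snoc_last (α := fun _ => X) ..
  refine Finset.sum_congr rfl fun u _ => congrArg _ ?_
  simp only [hreward, hstate, finalHist_trajExtend, mul_add, Finset.sum_add_distrib,
    ← Finset.sum_mul, (hp _ _).2, one_mul, mul_left_comm _ γ, ← Finset.mul_sum]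

theorem sum_trajProb_mul_alphaRec (p : X → U1 × U2 → X × (Z1 × Z2) → ℝ)
    (hp : ∀ x u, IsDist (p x u)) (r : X → U1 × U2 → ℝ) (γ : ℝ) (s0 : X → ℝ)
    (pol1 : (t : ℕ) → DR1 U1 Z1 t) (pol2 : (t : ℕ) → DR2 U2 Z2 t) (k τ : ℕ) :
    ∑ w, trajProb p s0 pol1 pol2 τ w *
        alphaRec p r γ pol1 pol2 k τ (w.1 (Fin.last τ)) (finalHist w) =
      ∑ i ∈ Finset.range k, γ ^ i * expectedReward p r s0 pol1 pol2 (τ + i) := by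
  induction k generalizing τ with
  | zero => simp [alphaRec]
  | succ k ih =>
    calc ∑ w, trajProb p s0 pol1 pol2 τ w *
          alphaRec p r γ pol1 pol2 (k + 1) τ (w.1 (Fin.last τ)) (finalHist w)
        = ∑ w, trajProb p s0 pol1 pol2 (τ + 1) w * (lastReward r w +
            γ * alphaRec p r γ pol1 pol2 k (τ + 1) (w.1 (Fin.last (τ + 1))) (finalHist w)) := by
          simp only [sum_trajProb_succ, nextStepExpect_lastReward_add_alphaRec p hp]
      _ = expectedReward p r s0 pol1 pol2 τ + γ * ∑ i ∈ Finset.range k,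
            γ ^ i * expectedReward p r s0 pol1 pol2 (τ + 1 + i) := by
          rw [← ih, expectedReward, Finset.mul_sum, ← Finset.sum_add_distrib]
          exact Finset.sum_congr rfl fun w _ => by ring
      _ = _ := by
          rw [Finset.sum_range_succ', Finset.mul_sum, pow_zero, one_mul, add_zero, add_comm]
          refine congrArg₂ _ (Finset.sum_congr rfl fun i _ => ?_) rfl
          rw [add_right_comm, add_assoc, pow_succ]
          ring

theorem expReturnFrom_eq_sum_trajProb_mul_alphaRec (p : X → U1 × U2 → X × (Z1 × Z2) → ℝ)
    (hp : ∀ x u, IsDist (p x u)) (r : X → U1 × U2 → ℝ) (γ : ℝ) (s0 : X → ℝ)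
    (pol1 : (t : ℕ) → DR1 U1 Z1 t) (pol2 : (t : ℕ) → DR2 U2 Z2 t) {ℓ τ : ℕ} (hτ : τ ≤ ℓ) :
    expReturnFrom p r γ s0 pol1 pol2 ℓ τ =
      ∑ w, trajProb p s0 pol1 pol2 τ w *
        alphaRec p r γ pol1 pol2 (ℓ - τ) τ (w.1 (Fin.last τ)) (finalHist w) := by
  rw [expReturnFrom_eq_sum_expectedReward p hp r γ s0 pol1 pol2 hτ,
    sum_trajProb_mul_alphaRec p hp]

theorem alphaRec_congr (p : X → U1 × U2 → X × (Z1 × Z2) → ℝ) (r : X → U1 × U2 → ℝ) (γ : ℝ)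
    {pol1 pol1' : (t : ℕ) → DR1 U1 Z1 t} {pol2 pol2' : (t : ℕ) → DR2 U2 Z2 t} (k : ℕ) {τ : ℕ}
    (h1 : ∀ t, τ ≤ t → pol1 t = pol1' t) (h2 : ∀ t, τ ≤ t → pol2 t = pol2' t) :
    alphaRec p r γ pol1 pol2 k τ = alphaRec p r γ pol1' pol2' k τ := by
  induction k generalizing τ with
  | zero => rfl
  | succ k ih =>
    funext x o
    simp only [alphaRec, h1 τ le_rfl, h2 τ le_rfl,
      ih (τ := τ + 1) (fun t ht => h1 t (by omega)) (fun t ht => h2 t (by omega))]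

end PolicyEvaluation

section OccupancySufficiency

variable {X U1 U2 Z1 Z2 : Type}
variable [Fintype X] [Fintype U1] [Fintype U2] [Fintype Z1] [Fintype Z2]
variable [DecidableEq X] [DecidableEq U1] [DecidableEq U2] [DecidableEq Z1] [DecidableEq Z2]

theorem sum_occInduced_mul (p : X → U1 × U2 → X × (Z1 × Z2) → ℝ) (s0 : X → ℝ)
    (pol1 : (t : ℕ) → DR1 U1 Z1 t) (pol2 : (t : ℕ) → DR2 U2 Z2 t) (τ : ℕ)
    (g : X → JHist U1 Z1 U2 Z2 τ → ℝ) :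
    ∑ xo, occInduced p s0 pol1 pol2 τ xo * g xo.1 xo.2 =
      ∑ w, trajProb p s0 pol1 pol2 τ w * g (w.1 (Fin.last τ)) (finalHist w) := by
  simp only [occInduced, Finset.sum_mul, ite_mul, zero_mul]
  rw [Finset.sum_comm]
  refine Finset.sum_congr rfl fun w _ => ?_
  simp only [← Prod.ext_iff (x := (w.1 (Fin.last τ), histUpTo τ w.2 τ le_rfl)), Finset.sum_ite_eq,
    Finset.mem_univ, if_true, finalHist]

theorem expReturnFrom_splice_eq_sum_occInduced_mul_alphaRec
    (p : X → U1 × U2 → X × (Z1 × Z2) → ℝ) (hp : ∀ x u, IsDist (p x u)) (r : X → U1 × U2 → ℝ)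
    (γ : ℝ) (s0 : X → ℝ) {ℓ τ : ℕ} (hτ : τ ≤ ℓ)
    (pre1 : (t : ℕ) → DR1 U1 Z1 t) (pre2 : (t : ℕ) → DR2 U2 Z2 t)
    (cont1 : (t : ℕ) → DR1 U1 Z1 t) (cont2 : (t : ℕ) → DR2 U2 Z2 t) :
    expReturnFrom p r γ s0 (fun t => if t < τ then pre1 t else cont1 t)
        (fun t => if t < τ then pre2 t else cont2 t) ℓ τ =
      ∑ xo : X × JHist U1 Z1 U2 Z2 τ,
        occInduced p s0 pre1 pre2 τ xo * alphaRec p r γ cont1 cont2 (ℓ - τ) τ xo.1 xo.2 := by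
  rw [expReturnFrom_eq_sum_trajProb_mul_alphaRec p hp r γ s0 _ _ hτ, sum_occInduced_mul,
    trajProb_congr p s0 (fun t ht => if_pos ht) (fun t ht => if_pos ht),
    alphaRec_congr p r γ _ (fun t ht => if_neg ht.not_gt) (fun t ht => if_neg ht.not_gt)]

theorem stmt8_general
    (p : X → U1 × U2 → X × (Z1 × Z2) → ℝ) (r : X → U1 × U2 → ℝ)
    (s0 : X → ℝ) (γ : ℝ) (ℓ : ℕ)
    (hp : ∀ x u, IsDist (p x u))
    (τ : ℕ) (hτ : τ ≤ ℓ)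
    (pre1 : (t : ℕ) → DR1 U1 Z1 t) (pre2 : (t : ℕ) → DR2 U2 Z2 t) :
    (∀ (cont1 : (t : ℕ) → DR1 U1 Z1 t) (cont2 : (t : ℕ) → DR2 U2 Z2 t),
        expReturnFrom p r γ s0 (fun t => if t < τ then pre1 t else cont1 t)
            (fun t => if t < τ then pre2 t else cont2 t) ℓ τ =
          ∑ xo : X × JHist U1 Z1 U2 Z2 τ,
            occInduced p s0 pre1 pre2 τ xo *
              alphaRec p r γ cont1 cont2 (ℓ - τ) τ xo.1 xo.2) ∧
      ∀ (pre1' : (t : ℕ) → DR1 U1 Z1 t) (pre2' : (t : ℕ) → DR2 U2 Z2 t),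
        occInduced p s0 pre1 pre2 τ = occInduced p s0 pre1' pre2' τ →
        ∀ (cont1 : (t : ℕ) → DR1 U1 Z1 t) (cont2 : (t : ℕ) → DR2 U2 Z2 t),
          expReturnFrom p r γ s0 (fun t => if t < τ then pre1 t else cont1 t)
              (fun t => if t < τ then pre2 t else cont2 t) ℓ τ =
            expReturnFrom p r γ s0 (fun t => if t < τ then pre1' t else cont1 t)
              (fun t => if t < τ then pre2' t else cont2 t) ℓ τ := by
  have eval := expReturnFrom_splice_eq_sum_occInduced_mul_alphaRec p hp r γ s0 hτ
  exact ⟨eval pre1 pre2, fun pre1' pre2' hocc cont1 cont2 => by rw [eval, eval, hocc]⟩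

/-- the occupancy state is a sufficient statistic for policy
evaluation: for any prefix `(a_0, …, a_{τ-1})` inducing occupancy state `s_τ` and any
continuation joint policy `a_{τ:}`, the expected discounted return from stage `τ` equals
`Σ_{x,o} s_τ(x,o) α^{a_{τ:}}_τ(x,o)`; consequently, two prefixes inducing the same
occupancy state yield the same expected continuation return under every continuation
joint policy. -/
theorem stmt8
    [Nonempty X] [Nonempty U1] [Nonempty U2] [Nonempty Z1] [Nonempty Z2]
    (p : X → U1 × U2 → X × (Z1 × Z2) → ℝ) (r : X → U1 × U2 → ℝ)
    (s0 : X → ℝ) (γ : ℝ) (ℓ : ℕ)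
    (hp : ∀ x u, IsDist (p x u)) (hs0 : IsDist s0) (hγ0 : 0 ≤ γ) (hγ1 : γ < 1)
    (τ : ℕ) (hτ : τ ≤ ℓ)
    (pre1 : (t : ℕ) → DR1 U1 Z1 t) (pre2 : (t : ℕ) → DR2 U2 Z2 t) :
    (∀ (cont1 : (t : ℕ) → DR1 U1 Z1 t) (cont2 : (t : ℕ) → DR2 U2 Z2 t),
        expReturnFrom p r γ s0 (fun t => if t < τ then pre1 t else cont1 t)
            (fun t => if t < τ then pre2 t else cont2 t) ℓ τ =
          ∑ xo : X × JHist U1 Z1 U2 Z2 τ,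
            occInduced p s0 pre1 pre2 τ xo *
              alphaRec p r γ cont1 cont2 (ℓ - τ) τ xo.1 xo.2) ∧
      ∀ (pre1' : (t : ℕ) → DR1 U1 Z1 t) (pre2' : (t : ℕ) → DR2 U2 Z2 t),
        occInduced p s0 pre1 pre2 τ = occInduced p s0 pre1' pre2' τ →
        ∀ (cont1 : (t : ℕ) → DR1 U1 Z1 t) (cont2 : (t : ℕ) → DR2 U2 Z2 t),
          expReturnFrom p r γ s0 (fun t => if t < τ then pre1 t else cont1 t)
              (fun t => if t < τ then pre2 t else cont2 t) ℓ τ =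
            expReturnFrom p r γ s0 (fun t => if t < τ then pre1' t else cont1 t)
              (fun t => if t < τ then pre2' t else cont2 t) ℓ τ :=
  stmt8_general p r s0 γ ℓ hp τ hτ pre1 pre2

end OccupancySufficiency
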